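/- Let c₁, c₂, c₃, d₁, d₂, d₃ be integers satisfying (c₁d₂ − c₂d₁)(c₁d₃ − c₃d₁)(c₂d₃ − c₃d₂) ≠ 0, and write λ_j = c_j α + d_j β for j = 1, 2, 3. There is a constant C (depending only on c₁,…,d₃) such that for all large real P, all R with 1 ≤ R ≤ P, and every subset ℬ ⊆ [P/2, P] ∩ ℤ, one has ∫₀¹∫₀¹ ∏_{i=1}^{3} |F(λ_i; ℬ)² h(λ_i; P, R)²| dα dβ ≤ C · Σ_{|k|≤2P³} R(k)³, where R(k) denotes the number of quadruples (x₁, x₂, x₃, x₄) with P/2 ≤ x₁, x₂ ≤ P integers, x₃, x₄ ∈ 𝒜(P, R), and x₁³ − x₂³ + x₃³ − x₄³ = k. -/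

import Mathlib

open Filter MeasureTheory
open scoped Classical

noncomputable section

/-- `e(z) = exp(2πiz)`. -/
def ee (z : ℝ) : ℂ := Complex.exp (2 * Real.pi * Complex.I * z)

/-- `τ = (213 − 4√2833)/164`. -/
def tau : ℝ := (213 - 4 * Real.sqrt 2833) / 164

/-- `𝒜(P, R)`: the `R`-smooth numbers in `[1, P]`. -/
def smoothSet (P R : ℝ) : Finset ℕ :=
  (Finset.Icc 1 ⌊P⌋₊).filter fun n : ℕ => ∀ p : ℕ, p.Prime → p ∣ n → (p : ℝ) ≤ R

/-- The smooth Weyl sum `h(θ; P, R)`. -/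
def hsum (P R θ : ℝ) : ℂ := ∑ y ∈ smoothSet P R, ee (θ * (y : ℝ) ^ 3)

/-- The exponential sum `F(θ; ℬ)` over a set `ℬ` of integers. -/
def Fsum (B : Finset ℤ) (θ : ℝ) : ℂ := ∑ x ∈ B, ee (θ * (x : ℝ) ^ 3)

/-- `R(k)`: the number of quadruples `(x₁, x₂, x₃, x₄)` with `P/2 ≤ x₁, x₂ ≤ P` integers,
`x₃, x₄ ∈ 𝒜(P, R)`, and `x₁³ − x₂³ + x₃³ − x₄³ = k`. -/
def Rk (P R : ℝ) (k : ℤ) : ℕ :=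
  Nat.card {x : (ℤ × ℤ) × ℕ × ℕ //
    (P / 2 ≤ (x.1.1 : ℝ) ∧ (x.1.1 : ℝ) ≤ P) ∧ (P / 2 ≤ (x.1.2 : ℝ) ∧ (x.1.2 : ℝ) ≤ P) ∧
      x.2.1 ∈ smoothSet P R ∧ x.2.2 ∈ smoothSet P R ∧
        x.1.1 ^ 3 - x.1.2 ^ 3 + (x.2.1 : ℤ) ^ 3 - (x.2.2 : ℤ) ^ 3 = k}

/-!
Expanding the squares and integrating term by term (orthogonality of `e(αm)` on `[0, 1]`) turns
the integral into the number of triples of quadruples whose values `kᵢ = x₁³ − x₂³ + x₃³ − x₄³`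
satisfy `∑ cᵢ kᵢ = ∑ dᵢ kᵢ = 0`. The non-vanishing minors say that `c × d` has no zero
coordinate; as the solutions `(k₁, k₂, k₃)` lie on the line spanned by `c × d`, any single `kⱼ`
determines the whole solution. If `ρ(k) ≤ R(k)` counts the quadruples with value `k`, counting
triples fibre by fibre and applying AM–GM, `ρ(k₁) ρ(k₂) ρ(k₃) ≤ (ρ(k₁)³ + ρ(k₂)³ + ρ(k₃)³) / 3`,
gives the bound with `C = 1` for every `P`.
-/

open Matrix Finset

lemma ee_add (a b : ℝ) : ee (a + b) = ee a * ee b := by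
  simp only [ee, ← Complex.exp_add]; push_cast; ring_nf

lemma conj_ee (a : ℝ) : (starRingEnd ℂ) (ee a) = ee (-a) := by
  simp only [ee, ← Complex.exp_conj, map_mul, Complex.conj_I, Complex.conj_ofReal, map_ofNat]
  push_cast; ring_nf

lemma ee_sum {ι : Type*} (s : Finset ι) (f : ι → ℝ) :
    ee (∑ i ∈ s, f i) = ∏ i ∈ s, ee (f i) := by
  simp only [ee, ← Complex.exp_sum]; push_cast; rw [Finset.mul_sum]

lemma integral_ee_mul_int (n : ℤ) : ∫ x in (0:ℝ)..1, ee (x * n) = if n = 0 then 1 else 0 := by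
  split_ifs with hn
  · simp [hn, ee]
  have hc : 2 * Real.pi * Complex.I * n ≠ 0 := by simp [Real.pi_ne_zero, hn]
  have hexp : Complex.exp (2 * Real.pi * Complex.I * n) = 1 := by
    rw [← Complex.exp_int_mul_two_pi_mul_I n]; ring_nf
  have hee (x : ℝ) : ee (x * n) = Complex.exp (2 * Real.pi * Complex.I * n * x) := by
    simp only [ee]; push_cast; ring_nf
  simp_rw [hee]
  rw [integral_exp_mul_complex hc]
  simp [hexp]

lemma integral_ee_add_mul_int (x : ℝ) (n : ℤ) :
    ∫ y in (0:ℝ)..1, ee (x + y * n) = ee x * if n = 0 then 1 else 0 := by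
  simp_rw [ee_add, intervalIntegral.integral_const_mul, integral_ee_mul_int]

lemma integral_integral_sum_ee {ι : Type*} (S : Finset ι) (a b : ι → ℤ) :
    ∫ α in (0:ℝ)..1, ∫ β in (0:ℝ)..1, ∑ t ∈ S, ee (α * a t + β * b t) =
      #{t ∈ S | a t = 0 ∧ b t = 0} := by
  have hinner (α : ℝ) : ∫ β in (0:ℝ)..1, ∑ t ∈ S, ee (α * a t + β * b t) =
      ∑ t ∈ S, ee (α * a t) * if b t = 0 then 1 else 0 := by
    rw [intervalIntegral.integral_finsetSum fun t _ => by
      exact (Continuous.intervalIntegrable (by unfold ee; fun_prop) _ _)]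
    simp_rw [integral_ee_add_mul_int]
  simp_rw [hinner]
  rw [intervalIntegral.integral_finsetSum fun t _ => by
      exact (Continuous.intervalIntegrable (by unfold ee; fun_prop) _ _)]
  simp_rw [intervalIntegral.integral_mul_const, integral_ee_mul_int]
  simp only [ite_zero_mul_ite_zero, one_mul, Finset.natCast_card_filter]

lemma ofReal_norm_sq_sum_ee {ι : Type*} (s : Finset ι) (f : ι → ℝ) (θ : ℝ) :
    ((‖∑ x ∈ s, ee (θ * f x)‖ ^ 2 : ℝ) : ℂ) = ∑ p ∈ s ×ˢ s, ee (θ * (f p.1 - f p.2)) := by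
  rw [Complex.ofReal_pow, ← Complex.mul_conj', map_sum, Finset.sum_mul_sum, Finset.sum_product]
  simp only [conj_ee, ← ee_add, sub_eq_add_neg, mul_add, mul_neg]

def quadruples (P R : ℝ) (B : Finset ℤ) : Finset ((ℤ × ℤ) × ℕ × ℕ) :=
  (B ×ˢ B) ×ˢ (smoothSet P R ×ˢ smoothSet P R)

def cubeForm (x : (ℤ × ℤ) × ℕ × ℕ) : ℤ :=
  x.1.1 ^ 3 - x.1.2 ^ 3 + (x.2.1 : ℤ) ^ 3 - (x.2.2 : ℤ) ^ 3

lemma ofReal_norm_sq_Fsum_mul_norm_sq_hsum (P R : ℝ) (B : Finset ℤ) (θ : ℝ) :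
    ((‖Fsum B θ‖ ^ 2 * ‖hsum P R θ‖ ^ 2 : ℝ) : ℂ) =
      ∑ x ∈ quadruples P R B, ee (θ * cubeForm x) := by
  rw [Complex.ofReal_mul, Fsum, hsum, ofReal_norm_sq_sum_ee, ofReal_norm_sq_sum_ee,
    Finset.sum_mul_sum, quadruples, Finset.sum_product (s := B ×ˢ B)]
  simp only [← ee_add, cubeForm]
  push_cast
  ring_nf

lemma ofReal_twelfth_moment_integrand (P R : ℝ) (B : Finset ℤ) (c d : Fin 3 → ℤ) (α β : ℝ) :
    ((∏ i : Fin 3, ‖Fsum B (c i * α + d i * β)‖ ^ 2 * ‖hsum P R (c i * α + d i * β)‖ ^ 2 :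
        ℝ) : ℂ) =
      ∑ t ∈ Fintype.piFinset fun _ => quadruples P R B,
        ee (α * (c ⬝ᵥ (cubeForm ∘ t) : ℤ) + β * (d ⬝ᵥ (cubeForm ∘ t) : ℤ)) := by
  simp only [Complex.ofReal_prod, ofReal_norm_sq_Fsum_mul_norm_sq_hsum, Finset.prod_univ_sum]
  refine Finset.sum_congr rfl fun t _ => ?_
  rw [← ee_sum]
  congr 1
  simp only [dotProduct, Function.comp_apply]
  push_cast
  rw [Finset.mul_sum, Finset.mul_sum, ← Finset.sum_add_distrib]
  exact Finset.sum_congr rfl fun i _ => by ring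

lemma twelfth_moment_eq_card (P R : ℝ) (B : Finset ℤ) (c d : Fin 3 → ℤ) :
    ∫ α in (0:ℝ)..1, ∫ β in (0:ℝ)..1,
        ∏ i : Fin 3, ‖Fsum B (c i * α + d i * β)‖ ^ 2 * ‖hsum P R (c i * α + d i * β)‖ ^ 2 =
      #{t ∈ Fintype.piFinset fun _ => quadruples P R B |
        c ⬝ᵥ (cubeForm ∘ t) = 0 ∧ d ⬝ᵥ (cubeForm ∘ t) = 0} := by
  apply Complex.ofReal_injective
  simp_rw [← intervalIntegral.integral_ofReal, ofReal_twelfth_moment_integrand]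
  rw [integral_integral_sum_ee]
  norm_cast

lemma card_filter_piFinset_comp_eq {α β ι : Type*} [DecidableEq β] [Fintype ι] [DecidableEq ι]
    (Q : Finset α) (g : α → β) (k : ι → β) :
    #{t ∈ Fintype.piFinset fun _ => Q | g ∘ t = k} = ∏ i, #{q ∈ Q | g q = k i} := by
  rw [← Fintype.card_piFinset]
  congr 1
  ext t
  simp [Fintype.mem_piFinset, funext_iff, forall_and]

lemma prod_le_sum_pow_div {n : ℕ} (hn : n ≠ 0) (x : Fin n → ℝ) (hx : ∀ i, 0 ≤ x i) :
    ∏ i, x i ≤ (∑ i, x i ^ n) / n := by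
  have := Real.geom_mean_le_arith_mean_weighted Finset.univ (fun _ => (n : ℝ)⁻¹)
    (fun i => x i ^ n) (fun _ _ => by positivity) (by simp [hn]) (fun i _ => pow_nonneg (hx i) n)
  simpa [Real.pow_rpow_inv_natCast (hx _) hn, inv_mul_eq_div, Finset.sum_div] using this

lemma card_filter_piFinset_le_sum_pow {α β : Type*} [DecidableEq β] {n : ℕ} (hn : n ≠ 0)
    (Q : Finset α) (g : α → β) (p : (Fin n → β) → Prop) [DecidablePred p]
    (hp : ∀ i, Set.InjOn (fun v => v i) {v | p v}) (M : Finset β) (hM : ∀ q ∈ Q, g q ∈ M) :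
    (#{t ∈ Fintype.piFinset fun _ : Fin n => Q | p (g ∘ t)} : ℝ) ≤
      ∑ m ∈ M, (#{q ∈ Q | g q = m} : ℝ) ^ n := by
  set T := {t ∈ Fintype.piFinset fun _ : Fin n => Q | p (g ∘ t)}
  set K := T.image (g ∘ ·)
  set ρ : β → ℝ := fun m => #{q ∈ Q | g q = m}
  have hfiber (k : Fin n → β) : (#{t ∈ T | g ∘ t = k} : ℝ) ≤ ∏ i, ρ (k i) := by
    have := Finset.card_le_card (Finset.filter_subset_filter (g ∘ · = k)
      (Finset.filter_subset (p <| g ∘ ·) (Fintype.piFinset fun _ => Q)))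
    rw [card_filter_piFinset_comp_eq] at this
    simpa only [ρ, Nat.cast_prod] using (Nat.cast_le (α := ℝ)).mpr this
  have hproj (i : Fin n) : ∑ k ∈ K, ρ (k i) ^ n ≤ ∑ m ∈ M, ρ m ^ n := by
    have hinj : Set.InjOn (fun k : Fin n → β => k i) K := (hp i).mono fun k hk => by
      obtain ⟨t, ht, rfl⟩ := Finset.mem_image.mp hk
      exact (Finset.mem_filter.mp ht).2
    rw [← Finset.sum_image (f := fun m => ρ m ^ n) hinj]
    refine Finset.sum_le_sum_of_subset_of_nonneg (fun m hm => ?_) fun _ _ _ => by positivity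
    obtain ⟨k, hk, rfl⟩ := Finset.mem_image.mp hm
    obtain ⟨t, ht, rfl⟩ := Finset.mem_image.mp hk
    exact hM _ (Fintype.mem_piFinset.mp (Finset.mem_filter.mp ht).1 i)
  calc (#T : ℝ) = ∑ k ∈ K, (#{t ∈ T | g ∘ t = k} : ℝ) := by
        exact_mod_cast Finset.card_eq_sum_card_image _ _
    _ ≤ ∑ k ∈ K, (∑ i, ρ (k i) ^ n) / n := Finset.sum_le_sum fun k _ =>
        (hfiber k).trans (prod_le_sum_pow_div hn _ fun _ => by positivity)
    _ = (∑ i, ∑ k ∈ K, ρ (k i) ^ n) / n := by rw [← Finset.sum_div, Finset.sum_comm]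
    _ ≤ (∑ _i : Fin n, ∑ m ∈ M, ρ m ^ n) / n := by gcongr with i; exact hproj i
    _ = ∑ m ∈ M, ρ m ^ n := by simp [hn]

lemma mul_apply_eq_of_cross_eq_zero {R : Type*} [CommRing R] {w n : Fin 3 → R}
    (h : w ⨯₃ n = 0) (i j : Fin 3) : w j * n i = w i * n j := by
  obtain ⟨h₀, h₁, h₂⟩ : w 1 * n 2 = w 2 * n 1 ∧ w 2 * n 0 = w 0 * n 2 ∧ w 0 * n 1 = w 1 * n 0 := by
    simpa [cross_apply, funext_iff, Fin.forall_fin_succ, sub_eq_zero] using h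
  fin_cases i <;> fin_cases j <;> grind

lemma injOn_apply_of_cross_apply_ne_zero {R : Type*} [CommRing R] [IsDomain R]
    {c d : Fin 3 → R} {i : Fin 3} (hi : (c ⨯₃ d) i ≠ 0) :
    Set.InjOn (fun v : Fin 3 → R => v i) {v | c ⬝ᵥ v = 0 ∧ d ⬝ᵥ v = 0} := by
  rintro u ⟨hcu, hdu⟩ v ⟨hcv, hdv⟩ (huv : u i = v i)
  set w := u - v
  have hcross : w ⨯₃ (c ⨯₃ d) = 0 := by
    rw [cross_cross_eq_smul_sub_smul', dotProduct_comm, dotProduct_sub, dotProduct_sub]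
    simp [hcu, hdu, hcv, hdv]
  have hwi : w i = 0 := sub_eq_zero.mpr huv
  refine sub_eq_zero.mp (funext fun j => ?_)
  have := mul_apply_eq_of_cross_eq_zero hcross i j
  rw [hwi, zero_mul] at this
  exact (mul_eq_zero.mp this).resolve_right hi

lemma Rk_eq_card_filter (P R : ℝ) (k : ℤ) :
    Rk P R k = #{x ∈ quadruples P R (Finset.Icc ⌈P / 2⌉ ⌊P⌋) | cubeForm x = k} := by
  rw [Rk, ← Nat.card_eq_finsetCard]
  refine Nat.card_congr (Equiv.subtypeEquivRight fun x => ?_)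
  rw [Finset.mem_filter]
  simp [quadruples, cubeForm, Int.ceil_le, Int.le_floor, and_assoc]

lemma card_filter_cubeForm_le_Rk {P R : ℝ} {B : Finset ℤ}
    (hB : ∀ x ∈ B, P / 2 ≤ (x : ℝ) ∧ (x : ℝ) ≤ P) (k : ℤ) :
    #{x ∈ quadruples P R B | cubeForm x = k} ≤ Rk P R k := by
  rw [Rk_eq_card_filter]
  refine Finset.card_le_card (Finset.filter_subset_filter _ ?_)
  have hBI : B ⊆ Finset.Icc ⌈P / 2⌉ ⌊P⌋ := fun x hx => by
    simpa [Int.ceil_le, Int.le_floor] using hB x hx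
  exact Finset.product_subset_product (Finset.product_subset_product hBI hBI) subset_rfl

lemma cast_le_of_mem_smoothSet {P R : ℝ} {y : ℕ} (hy : y ∈ smoothSet P R) : (y : ℝ) ≤ P := by
  obtain ⟨⟨hy1, hyP⟩, -⟩ := by simpa [smoothSet] using hy
  exact (Nat.le_floor_iff' (by omega)).mp hyP

lemma cubeForm_mem_Icc {P R : ℝ} {B : Finset ℤ} (hB : ∀ x ∈ B, P / 2 ≤ (x : ℝ) ∧ (x : ℝ) ≤ P)
    {x : (ℤ × ℤ) × ℕ × ℕ} (hx : x ∈ quadruples P R B) :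
    cubeForm x ∈ Finset.Icc (-⌊2 * P ^ 3⌋) ⌊2 * P ^ 3⌋ := by
  simp only [quadruples, Finset.mem_product] at hx
  obtain ⟨⟨hx₁, hx₂⟩, hx₃, hx₄⟩ := hx
  have hcube {z : ℝ} (h0 : 0 ≤ z) (hP : z ≤ P) : 0 ≤ z ^ 3 ∧ z ^ 3 ≤ P ^ 3 :=
    ⟨by positivity, pow_le_pow_left₀ h0 hP 3⟩
  have h₁ := hcube (by linarith [hB _ hx₁]) (hB _ hx₁).2
  have h₂ := hcube (by linarith [hB _ hx₂]) (hB _ hx₂).2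
  have h₃ := hcube (Nat.cast_nonneg _) (cast_le_of_mem_smoothSet hx₃)
  have h₄ := hcube (Nat.cast_nonneg _) (cast_le_of_mem_smoothSet hx₄)
  have habs : |(cubeForm x : ℝ)| ≤ 2 * P ^ 3 := by
    rw [abs_le, cubeForm]; push_cast; constructor <;> linarith
  rw [Finset.mem_Icc, neg_le]
  exact ⟨Int.le_floor.mpr (by push_cast; exact (neg_le_abs _).trans habs),
    Int.le_floor.mpr ((le_abs_self _).trans habs)⟩

theorem twelfth_moment_diagonal_reduction (c d : Fin 3 → ℤ)
    (hcd : (c 0 * d 1 - c 1 * d 0) * (c 0 * d 2 - c 2 * d 0) * (c 1 * d 2 - c 2 * d 1) ≠ 0) :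
    ∃ C : ℝ, ∃ P0 : ℝ, ∀ P : ℝ, P0 ≤ P →
      ∀ R : ℝ, 1 ≤ R → R ≤ P →
        ∀ B : Finset ℤ, (∀ x ∈ B, P / 2 ≤ (x : ℝ) ∧ (x : ℝ) ≤ P) →
          (∫ α in (0:ℝ)..1, ∫ β in (0:ℝ)..1,
              ∏ i : Fin 3,
                ‖Fsum B ((c i : ℝ) * α + (d i : ℝ) * β)‖ ^ 2 *
                  ‖hsum P R ((c i : ℝ) * α + (d i : ℝ) * β)‖ ^ 2) ≤
            C * ∑ k ∈ Finset.Icc (-⌊2 * P ^ 3⌋) ⌊2 * P ^ 3⌋, (Rk P R k : ℝ) ^ 3 := by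
  refine ⟨1, 0, fun P _ R _ _ B hB => ?_⟩
  have hcross (i : Fin 3) : (c ⨯₃ d) i ≠ 0 := by
    refine Finset.prod_ne_zero_iff.mp ?_ i (Finset.mem_univ i)
    rw [Fin.prod_univ_three, cross_apply]
    convert neg_ne_zero.mpr hcd using 1
    simp only [cons_val_zero, cons_val_one, Matrix.cons_val]
    ring
  rw [one_mul, twelfth_moment_eq_card]
  calc _ ≤ ∑ k ∈ Finset.Icc (-⌊2 * P ^ 3⌋) ⌊2 * P ^ 3⌋,
        (#{x ∈ quadruples P R B | cubeForm x = k} : ℝ) ^ 3 :=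
        card_filter_piFinset_le_sum_pow three_ne_zero _ _ _
          (fun _ => injOn_apply_of_cross_apply_ne_zero (hcross _)) _
          (fun _ => cubeForm_mem_Icc hB)
    _ ≤ _ := by gcongr with k; exact_mod_cast card_filter_cubeForm_le_Rk hB k
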